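/- arXiv:2006.16436 — 2 statements merged into one kernel-verified Lean document; each statement's English description precedes it below -/
import Mathlib

section
/- Let M₁ = (𝒜₁ →f₁ ℬ₁ ←i₁ 𝒜₂) and M₂ = (𝒜₂ →f₂ ℬ₂ ←i₂ 𝒜₃) be immersed DGA maps between triangular based DGAs over ℤ/2, with 𝒜₂ free on generators a₁,…,a_m. Let 𝒟 = ℬ₁ * Â₂ * ℬ₂ be the standard mapping cylinder DGA of i₁: 𝒜₂ → ℬ₁ and f₂: 𝒜₂ → ℬ₂, with subalgebra inclusions j₁: ℬ₁ → 𝒟 and j₂: ℬ₂ → 𝒟. Then (𝒜₁ →^{j₁∘f₁} 𝒟 ←^{j₂∘i₂} 𝒜₃) is an immersed DGA map, and its induced augmentation set equals the composite relation I(M₁)∘I(M₂), i.e. it equals the set of pairs (x,z) ∈ Aug(𝒜₃)/≈ × Aug(𝒜₁)/≈ such that there exists y ∈ Aug(𝒜₂)/≈ with (x,y) ∈ I(M₂) and (y,z) ∈ I(M₁). -/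
noncomputable section

namespace MCylAux
open FreeAlgebra

variable {X : Type}

/-- Upper-triangular matrix representation packaging two algebra maps and a derivation. -/
noncomputable def theta (p h q : X → ZMod 2) :
    FreeAlgebra (ZMod 2) X →ₐ[ZMod 2] Matrix (Fin 2) (Fin 2) (ZMod 2) :=
  FreeAlgebra.lift (ZMod 2) (fun x => !![p x, h x; 0, q x])

lemma theta_entries (p h q : X → ZMod 2) (a : FreeAlgebra (ZMod 2) X) :
    theta p h q a 1 0 = 0 ∧ theta p h q a 0 0 = FreeAlgebra.lift (ZMod 2) p a ∧
      theta p h q a 1 1 = FreeAlgebra.lift (ZMod 2) q a := by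
  induction a using FreeAlgebra.induction with
  | grade0 r =>
      simp [theta, Matrix.algebraMap_matrix_apply]
  | grade1 x =>
      simp [theta, Matrix.cons_val_zero, Matrix.cons_val_one]
  | mul a b ha hb =>
      obtain ⟨ha0, ha1, ha2⟩ := ha
      obtain ⟨hb0, hb1, hb2⟩ := hb
      simp only [map_mul, Matrix.mul_apply, Fin.sum_univ_two, ha0, ha1, ha2, hb0, hb1, hb2]
      refine ⟨by ring, by ring, by ring⟩
  | add a b ha hb =>
      obtain ⟨ha0, ha1, ha2⟩ := ha
      obtain ⟨hb0, hb1, hb2⟩ := hb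
      simp [ha0, ha1, ha2, hb0, hb1, hb2]


/-- The `(lift p, lift q)`-derivation with generator values `h`. -/
noncomputable def hmap (p h q : X → ZMod 2) :
    FreeAlgebra (ZMod 2) X →ₗ[ZMod 2] ZMod 2 where
  toFun a := theta p h q a 0 1
  map_add' a b := by simp
  map_smul' r a := by simp

lemma hmap_mul (p h q : X → ZMod 2) (a b : FreeAlgebra (ZMod 2) X) :
    hmap p h q (a * b) = hmap p h q a * FreeAlgebra.lift (ZMod 2) q b +
      FreeAlgebra.lift (ZMod 2) p a * hmap p h q b := by
  obtain ⟨ha0, ha1, ha2⟩ := theta_entries p h q a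
  obtain ⟨hb0, hb1, hb2⟩ := theta_entries p h q b
  show theta p h q (a * b) 0 1 = _
  rw [map_mul]
  simp only [Matrix.mul_apply, Fin.sum_univ_two, ha1, hb2]
  show _ + _ = theta p h q a 0 1 * _ + _ * theta p h q b 0 1
  ring

lemma hmap_ι (p h q : X → ZMod 2) (x : X) : hmap p h q (FreeAlgebra.ι (ZMod 2) x) = h x := by
  show theta p h q (FreeAlgebra.ι (ZMod 2) x) 0 1 = h x
  simp [theta]

lemma theta_congr (p h q p' h' q' : X → ZMod 2) (S : Set X)
    (hS : ∀ x ∈ S, p x = p' x ∧ h x = h' x ∧ q x = q' x)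
    {a : FreeAlgebra (ZMod 2) X} (ha : a ∈ Algebra.adjoin (ZMod 2) (FreeAlgebra.ι (ZMod 2) '' S)) :
    theta p h q a = theta p' h' q' a := by
  induction ha using Algebra.adjoin_induction with
  | mem x hx =>
      obtain ⟨y, hy, rfl⟩ := hx
      obtain ⟨h1, h2, h3⟩ := hS y hy
      simp [theta, h1, h2, h3]
  | algebraMap r => simp [AlgHom.commutes]
  | add x y _ _ hx hy => simp [hx, hy]
  | mul x y _ _ hx hy => simp [map_mul, hx, hy]

lemma hmap_congr (p h q p' h' q' : X → ZMod 2) (S : Set X)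
    (hS : ∀ x ∈ S, p x = p' x ∧ h x = h' x ∧ q x = q' x)
    {a : FreeAlgebra (ZMod 2) X} (ha : a ∈ Algebra.adjoin (ZMod 2) (FreeAlgebra.ι (ZMod 2) '' S)) :
    hmap p h q a = hmap p' h' q' a := by
  show theta p h q a 0 1 = theta p' h' q' a 0 1
  rw [theta_congr p h q p' h' q' S hS ha]

/-- Uniqueness of `(f,g)`-derivations with given values on generators. -/
lemma deriv_unique (f g : FreeAlgebra (ZMod 2) X →ₐ[ZMod 2] ZMod 2)
    (D₁ D₂ : FreeAlgebra (ZMod 2) X →ₗ[ZMod 2] ZMod 2)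
    (h₁ : ∀ a b, D₁ (a * b) = D₁ a * g b + f a * D₁ b)
    (h₂ : ∀ a b, D₂ (a * b) = D₂ a * g b + f a * D₂ b)
    (hgen : ∀ x, D₁ (FreeAlgebra.ι (ZMod 2) x) = D₂ (FreeAlgebra.ι (ZMod 2) x)) :
    ∀ a, D₁ a = D₂ a := by
  have hone : ∀ (D : FreeAlgebra (ZMod 2) X →ₗ[ZMod 2] ZMod 2),
      (∀ a b, D (a * b) = D a * g b + f a * D b) → D 1 = 0 := by
    intro D hD
    have h := hD 1 1
    rw [mul_one, map_one g, map_one f, mul_one, one_mul] at h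
    exact (right_eq_add.mp h)
  intro a
  induction a using FreeAlgebra.induction with
  | grade0 r =>
      rw [Algebra.algebraMap_eq_smul_one, map_smul, map_smul, hone D₁ h₁, hone D₂ h₂]
  | grade1 x => exact hgen x
  | mul a b ha hb => rw [h₁, h₂, ha, hb]
  | add a b ha hb => rw [map_add, map_add, ha, hb]

lemma d_one {Y : Type} (d : FreeAlgebra (ZMod 2) Y →ₗ[ZMod 2] FreeAlgebra (ZMod 2) Y)
    (hleib : ∀ a b, d (a * b) = d a * b + a * d b) : d 1 = 0 := by
  have := hleib 1 1
  rw [mul_one, mul_one, one_mul] at this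
  exact (right_eq_add.mp this)

lemma d_algebraMap {Y : Type} (d : FreeAlgebra (ZMod 2) Y →ₗ[ZMod 2] FreeAlgebra (ZMod 2) Y)
    (hleib : ∀ a b, d (a * b) = d a * b + a * d b) (r : ZMod 2) :
    d (algebraMap (ZMod 2) _ r) = 0 := by
  rw [Algebra.algebraMap_eq_smul_one, map_smul, d_one d hleib, smul_zero]

/-- A chain map condition on generators extends to the whole free algebra. -/
lemma chain_ext {Y Z : Type} (dY : FreeAlgebra (ZMod 2) Y →ₗ[ZMod 2] FreeAlgebra (ZMod 2) Y)
    (dZ : FreeAlgebra (ZMod 2) Z →ₗ[ZMod 2] FreeAlgebra (ZMod 2) Z)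
    (hY : ∀ a b, dY (a * b) = dY a * b + a * dY b)
    (hZ : ∀ a b, dZ (a * b) = dZ a * b + a * dZ b)
    (φ : FreeAlgebra (ZMod 2) Y →ₐ[ZMod 2] FreeAlgebra (ZMod 2) Z)
    (hgen : ∀ x, dZ (φ (FreeAlgebra.ι (ZMod 2) x)) = φ (dY (FreeAlgebra.ι (ZMod 2) x))) :
    ∀ a, dZ (φ a) = φ (dY a) := by
  intro a
  induction a using FreeAlgebra.induction with
  | grade0 r =>
      rw [AlgHom.commutes, d_algebraMap dY hY, d_algebraMap dZ hZ, map_zero]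
  | grade1 x => exact hgen x
  | mul a b ha hb => rw [map_mul, hZ, hY, map_add, map_mul, map_mul, ha, hb]
  | add a b ha hb => rw [map_add, map_add, map_add, map_add, ha, hb]

/-- Augmentations kill `d` of everything once `ε∘d` is multiplicatively compatible. -/
lemma aug_of_gen {Y : Type} (d : FreeAlgebra (ZMod 2) Y →ₗ[ZMod 2] FreeAlgebra (ZMod 2) Y)
    (hleib : ∀ a b, d (a * b) = d a * b + a * d b)
    (ε : FreeAlgebra (ZMod 2) Y →ₐ[ZMod 2] ZMod 2)
    (hgen : ∀ x, ε (d (FreeAlgebra.ι (ZMod 2) x)) = 0) :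
    ∀ a, ε (d a) = 0 := by
  intro a
  induction a using FreeAlgebra.induction with
  | grade0 r => rw [d_algebraMap d hleib, map_zero]
  | grade1 x => exact hgen x
  | mul a b ha hb => rw [hleib, map_add, map_mul, map_mul, ha, hb, zero_mul, mul_zero, add_zero]
  | add a b ha hb => rw [map_add, map_add, ha, hb, add_zero]


open scoped Classical in
/-- The recursively defined generator values of the lifted augmentation. -/
noncomputable def vAux {b : ℕ}
    (dB : FreeAlgebra (ZMod 2) (Fin b) →ₗ[ZMod 2] FreeAlgebra (ZMod 2) (Fin b))
    (side : Bool) (g hf : Fin b → ZMod 2) (inS : Fin b → Prop) (ev : Fin b → ZMod 2)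
    (j : Fin b) : ZMod 2 :=
  if inS j then ev j
  else g j + (if side then
      hmap g hf (fun l => if _h : l < j then vAux dB side g hf inS ev l else 0)
    else
      hmap (fun l => if _h : l < j then vAux dB side g hf inS ev l else 0) hf g)
    (dB (FreeAlgebra.ι (ZMod 2) j))
termination_by j.val
decreasing_by all_goals exact _h


lemma z2 : ∀ x : ZMod 2, x + x = 0 := by decide
lemma z3 : ∀ x y z : ZMod 2, x + y + z = 0 → y = x + z := by decide
lemma z5 : ∀ x y z : ZMod 2, x + y + z = 0 → x + y = z := by decide
lemma z6 : ∀ x y z : ZMod 2, x + y + z = 0 → z = x + y := by decide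
lemma z7 : ∀ x y : ZMod 2, x + y + x = y := by decide
lemma z8 : ∀ x y z : ZMod 2, x + y + z = 0 → x = y + z := by decide

/-- Homotopy lifting along a generator inclusion, version 1:
the given augmentation `ε` restricts to `e` (the left slot of the homotopy). -/
lemma lift_htpy₁ {n b : ℕ}
    (dA : FreeAlgebra (ZMod 2) (Fin n) →ₗ[ZMod 2] FreeAlgebra (ZMod 2) (Fin n))
    (dB : FreeAlgebra (ZMod 2) (Fin b) →ₗ[ZMod 2] FreeAlgebra (ZMod 2) (Fin b))
    (hdB_leib : ∀ a c, dB (a * c) = dB a * c + a * dB c)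
    (hdB_sq : ∀ a, dB (dB a) = 0)
    (hdB_tri : ∀ k : Fin b, dB (FreeAlgebra.ι (ZMod 2) k) ∈
      Algebra.adjoin (ZMod 2) (FreeAlgebra.ι (ZMod 2) '' {l : Fin b | l < k}))
    (i : FreeAlgebra (ZMod 2) (Fin n) →ₐ[ZMod 2] FreeAlgebra (ZMod 2) (Fin b))
    (hi : ∀ a, dB (i a) = i (dA a))
    (σ : Fin n → Fin b) (hσ : Function.Injective σ)
    (higen : ∀ x, i (FreeAlgebra.ι (ZMod 2) x) = FreeAlgebra.ι (ZMod 2) (σ x))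
    (ε : FreeAlgebra (ZMod 2) (Fin b) →ₐ[ZMod 2] ZMod 2) (hε : ∀ a, ε (dB a) = 0)
    (e e' : FreeAlgebra (ZMod 2) (Fin n) →ₐ[ZMod 2] ZMod 2)
    (K : FreeAlgebra (ZMod 2) (Fin n) →ₗ[ZMod 2] ZMod 2)
    (hK : ∀ a c, K (a * c) = K a * e' c + e a * K c)
    (hKd : ∀ a, e a + e' a = K (dA a))
    (hεi : ∀ a, ε (i a) = e a) :
    ∃ (ε' : FreeAlgebra (ZMod 2) (Fin b) →ₐ[ZMod 2] ZMod 2)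
      (H : FreeAlgebra (ZMod 2) (Fin b) →ₗ[ZMod 2] ZMod 2),
      (∀ a, ε' (dB a) = 0) ∧ (∀ a, ε' (i a) = e' a) ∧
      (∀ a c, H (a * c) = H a * ε' c + ε a * H c) ∧ (∀ a, ε a + ε' a = H (dB a)) := by
  classical
  set g : Fin b → ZMod 2 := fun j => ε (FreeAlgebra.ι (ZMod 2) j) with hgdef
  set inS : Fin b → Prop := fun j => ∃ k, σ k = j with hinSdef
  set hf : Fin b → ZMod 2 := fun j => if h : inS j then K (FreeAlgebra.ι (ZMod 2) h.choose) else 0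
    with hhfdef
  set ev : Fin b → ZMod 2 := fun j => if h : inS j then e' (FreeAlgebra.ι (ZMod 2) h.choose) else 0
    with hevdef
  set v : Fin b → ZMod 2 := vAux dB true g hf inS ev with hvdef0
  set ε' : FreeAlgebra (ZMod 2) (Fin b) →ₐ[ZMod 2] ZMod 2 := FreeAlgebra.lift (ZMod 2) v
    with hε'def
  set H : FreeAlgebra (ZMod 2) (Fin b) →ₗ[ZMod 2] ZMod 2 := hmap g hf v with hHdef
  have hliftg : FreeAlgebra.lift (ZMod 2) g = ε := by
    apply FreeAlgebra.hom_ext; funext x; simp [hgdef]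
  have hε'ι : ∀ j, ε' (FreeAlgebra.ι (ZMod 2) j) = v j := by
    intro j; simp [hε'def]
  have Hmul : ∀ a c, H (a * c) = H a * ε' c + ε a * H c := by
    intro a c
    rw [hHdef, hmap_mul, hliftg, hε'def]
  have Hι : ∀ j, H (FreeAlgebra.ι (ZMod 2) j) = hf j := fun j => hmap_ι g hf v j
  have hfσ : ∀ k, hf (σ k) = K (FreeAlgebra.ι (ZMod 2) k) := by
    intro k
    have hS : inS (σ k) := ⟨k, rfl⟩
    rw [hhfdef]; simp only [dif_pos hS]
    rw [hσ hS.choose_spec]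
  have hevσ : ∀ k, ev (σ k) = e' (FreeAlgebra.ι (ZMod 2) k) := by
    intro k
    have hS : inS (σ k) := ⟨k, rfl⟩
    rw [hevdef]; simp only [dif_pos hS]
    rw [hσ hS.choose_spec]
  have hvunfold : ∀ j, v j = if inS j then ev j
      else g j + hmap g hf (fun l => if _h : l < j then v l else 0)
        (dB (FreeAlgebra.ι (ZMod 2) j)) := by
    intro j
    rw [hvdef0]
    conv_lhs => rw [vAux]
    simp only [if_true, reduceIte]
  have hε'σ : ∀ x, ε' (i (FreeAlgebra.ι (ZMod 2) x)) = e' (FreeAlgebra.ι (ZMod 2) x) := by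
    intro x
    rw [higen, hε'ι, hvunfold, if_pos ⟨x, rfl⟩, hevσ]
  have hε'i : ∀ a, ε' (i a) = e' a := by
    have : ε'.comp i = e' := by
      apply FreeAlgebra.hom_ext; funext x
      simpa using hε'σ x
    intro a; calc ε' (i a) = (ε'.comp i) a := rfl
      _ = e' a := by rw [this]
  have hHi : ∀ a, H (i a) = K a := by
    refine deriv_unique e e' (H.comp i.toLinearMap) K ?_ hK ?_
    · intro a c
      simp only [LinearMap.comp_apply, AlgHom.toLinearMap_apply, map_mul]
      rw [Hmul, hε'i, hεi]
    · intro x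
      simp only [LinearMap.comp_apply, AlgHom.toLinearMap_apply]
      rw [higen, Hι, hfσ]
  have genA : ∀ j, ε (FreeAlgebra.ι (ZMod 2) j) + ε' (FreeAlgebra.ι (ZMod 2) j)
      = H (dB (FreeAlgebra.ι (ZMod 2) j)) := by
    intro j
    by_cases hS : inS j
    · obtain ⟨k, rfl⟩ := hS
      have h1 : ε (FreeAlgebra.ι (ZMod 2) (σ k)) = e (FreeAlgebra.ι (ZMod 2) k) := by
        rw [← higen, hεi]
      have h2 : ε' (FreeAlgebra.ι (ZMod 2) (σ k)) = e' (FreeAlgebra.ι (ZMod 2) k) := by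
        rw [← higen]; exact hε'σ k
      rw [h1, h2, hKd, ← higen, hi, hHi]
    · rw [hε'ι, hvunfold, if_neg hS]
      have hagree : hmap g hf (fun l => if _h : l < j then v l else 0)
          (dB (FreeAlgebra.ι (ZMod 2) j)) = H (dB (FreeAlgebra.ι (ZMod 2) j)) := by
        rw [hHdef]
        refine hmap_congr _ _ _ _ _ _ {l | l < j} ?_ (hdB_tri j)
        intro x hx
        have hx' : x < j := hx
        exact ⟨rfl, rfl, by rw [dif_pos hx']⟩
      rw [hagree, ← add_assoc, z2, zero_add]
  have step_mul : ∀ x y : FreeAlgebra (ZMod 2) (Fin b),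
      (ε' (dB x) = 0 ∧ ε x + ε' x + H (dB x) = 0) →
      (ε' (dB y) = 0 ∧ ε y + ε' y + H (dB y) = 0) →
      (ε' (dB (x * y)) = 0 ∧ ε (x * y) + ε' (x * y) + H (dB (x * y)) = 0) := by
    intro x y hx' hy'
    constructor
    · rw [hdB_leib, map_add, map_mul, map_mul, hx'.1, hy'.1, zero_mul, mul_zero, add_zero]
    · rw [map_mul, map_mul, hdB_leib, map_add, Hmul, Hmul, hε, hy'.1,
        z6 _ _ _ hx'.2, z6 _ _ _ hy'.2]
      simp only [zero_mul, mul_zero, add_zero, zero_add]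
      generalize ε x = p
      generalize ε y = q
      generalize ε' x = r
      generalize ε' y = s
      revert p q r s
      decide
  have step_add : ∀ x y : FreeAlgebra (ZMod 2) (Fin b),
      (ε' (dB x) = 0 ∧ ε x + ε' x + H (dB x) = 0) →
      (ε' (dB y) = 0 ∧ ε y + ε' y + H (dB y) = 0) →
      (ε' (dB (x + y)) = 0 ∧ ε (x + y) + ε' (x + y) + H (dB (x + y)) = 0) := by
    intro x y hx' hy'
    constructor
    · rw [map_add, map_add, hx'.1, hy'.1, add_zero]
    · rw [map_add, map_add, map_add, map_add]
      calc ε x + ε y + (ε' x + ε' y) + (H (dB x) + H (dB y))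
          = (ε x + ε' x + H (dB x)) + (ε y + ε' y + H (dB y)) := by ring
        _ = 0 := by rw [hx'.2, hy'.2, add_zero]
  have step_sc : ∀ r : ZMod 2,
      ε' (dB (algebraMap (ZMod 2) (FreeAlgebra (ZMod 2) (Fin b)) r)) = 0 ∧
      ε (algebraMap (ZMod 2) _ r) + ε' (algebraMap (ZMod 2) _ r) +
        H (dB (algebraMap (ZMod 2) (FreeAlgebra (ZMod 2) (Fin b)) r)) = 0 := by
    intro r
    constructor
    · rw [d_algebraMap dB hdB_leib, map_zero]
    · rw [d_algebraMap dB hdB_leib, map_zero, add_zero, AlgHom.commutes, AlgHom.commutes]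
      exact z2 _
  have gen_ok : ∀ l : Fin b, ε (FreeAlgebra.ι (ZMod 2) l) + ε' (FreeAlgebra.ι (ZMod 2) l)
      + H (dB (FreeAlgebra.ι (ZMod 2) l)) = 0 := by
    intro l; rw [genA l, z2]
  have main : ∀ m : ℕ, ∀ a ∈ Algebra.adjoin (ZMod 2)
      (FreeAlgebra.ι (ZMod 2) '' {l : Fin b | l.val < m}),
      ε' (dB a) = 0 ∧ ε a + ε' a + H (dB a) = 0 := by
    intro m
    induction m using Nat.strong_induction_on with
    | _ m IH =>
      intro a ha
      induction ha using Algebra.adjoin_induction with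
      | mem x hx =>
        obtain ⟨l, hl, rfl⟩ := hx
        refine ⟨?_, gen_ok l⟩
        have hw : dB (FreeAlgebra.ι (ZMod 2) l) ∈ Algebra.adjoin (ZMod 2)
            (FreeAlgebra.ι (ZMod 2) '' {l' : Fin b | l'.val < l.val}) := by
          refine Algebra.adjoin_mono (Set.image_mono ?_) (hdB_tri l)
          intro y hy; exact hy
        have hQ := IH l.val hl _ hw
        have hε'w : ε' (dB (FreeAlgebra.ι (ZMod 2) l))
            = ε (dB (FreeAlgebra.ι (ZMod 2) l))
              + H (dB (dB (FreeAlgebra.ι (ZMod 2) l))) := z3 _ _ _ hQ.2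
        rw [hε'w, hε, hdB_sq, map_zero, add_zero]
      | algebraMap r => exact step_sc r
      | add x y hx hy hx' hy' => exact step_add x y hx' hy'
      | mul x y hx hy hx' hy' => exact step_mul x y hx' hy'
  have final : ∀ a, ε' (dB a) = 0 ∧ ε a + ε' a + H (dB a) = 0 := by
    intro a
    induction a using FreeAlgebra.induction with
    | grade0 r => exact step_sc r
    | grade1 l =>
      refine main (l.val + 1) _ (Algebra.subset_adjoin ⟨l, ?_, rfl⟩)
      simp
    | mul x y hx' hy' => exact step_mul x y hx' hy'
    | add x y hx' hy' => exact step_add x y hx' hy'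
  exact ⟨ε', H, fun a => (final a).1, hε'i, Hmul, fun a => z5 _ _ _ (final a).2⟩

/-- Homotopy lifting along a generator inclusion, version 2:
the given augmentation `ε` restricts to `e'` (the right slot of the homotopy). -/
lemma lift_htpy₂ {n b : ℕ}
    (dA : FreeAlgebra (ZMod 2) (Fin n) →ₗ[ZMod 2] FreeAlgebra (ZMod 2) (Fin n))
    (dB : FreeAlgebra (ZMod 2) (Fin b) →ₗ[ZMod 2] FreeAlgebra (ZMod 2) (Fin b))
    (hdB_leib : ∀ a c, dB (a * c) = dB a * c + a * dB c)
    (hdB_sq : ∀ a, dB (dB a) = 0)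
    (hdB_tri : ∀ k : Fin b, dB (FreeAlgebra.ι (ZMod 2) k) ∈
      Algebra.adjoin (ZMod 2) (FreeAlgebra.ι (ZMod 2) '' {l : Fin b | l < k}))
    (i : FreeAlgebra (ZMod 2) (Fin n) →ₐ[ZMod 2] FreeAlgebra (ZMod 2) (Fin b))
    (hi : ∀ a, dB (i a) = i (dA a))
    (σ : Fin n → Fin b) (hσ : Function.Injective σ)
    (higen : ∀ x, i (FreeAlgebra.ι (ZMod 2) x) = FreeAlgebra.ι (ZMod 2) (σ x))
    (ε : FreeAlgebra (ZMod 2) (Fin b) →ₐ[ZMod 2] ZMod 2) (hε : ∀ a, ε (dB a) = 0)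
    (e e' : FreeAlgebra (ZMod 2) (Fin n) →ₐ[ZMod 2] ZMod 2)
    (K : FreeAlgebra (ZMod 2) (Fin n) →ₗ[ZMod 2] ZMod 2)
    (hK : ∀ a c, K (a * c) = K a * e' c + e a * K c)
    (hKd : ∀ a, e a + e' a = K (dA a))
    (hεi : ∀ a, ε (i a) = e' a) :
    ∃ (ε'' : FreeAlgebra (ZMod 2) (Fin b) →ₐ[ZMod 2] ZMod 2)
      (H : FreeAlgebra (ZMod 2) (Fin b) →ₗ[ZMod 2] ZMod 2),
      (∀ a, ε'' (dB a) = 0) ∧ (∀ a, ε'' (i a) = e a) ∧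
      (∀ a c, H (a * c) = H a * ε c + ε'' a * H c) ∧ (∀ a, ε'' a + ε a = H (dB a)) := by
  classical
  set g : Fin b → ZMod 2 := fun j => ε (FreeAlgebra.ι (ZMod 2) j) with hgdef
  set inS : Fin b → Prop := fun j => ∃ k, σ k = j with hinSdef
  set hf : Fin b → ZMod 2 := fun j => if h : inS j then K (FreeAlgebra.ι (ZMod 2) h.choose) else 0
    with hhfdef
  set ev : Fin b → ZMod 2 := fun j => if h : inS j then e (FreeAlgebra.ι (ZMod 2) h.choose) else 0
    with hevdef
  set v : Fin b → ZMod 2 := vAux dB false g hf inS ev with hvdef0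
  set ε'' : FreeAlgebra (ZMod 2) (Fin b) →ₐ[ZMod 2] ZMod 2 := FreeAlgebra.lift (ZMod 2) v
    with hε''def
  set H : FreeAlgebra (ZMod 2) (Fin b) →ₗ[ZMod 2] ZMod 2 := hmap v hf g with hHdef
  have hliftg : FreeAlgebra.lift (ZMod 2) g = ε := by
    apply FreeAlgebra.hom_ext; funext x; simp [hgdef]
  have hε''ι : ∀ j, ε'' (FreeAlgebra.ι (ZMod 2) j) = v j := by
    intro j; simp [hε''def]
  have Hmul : ∀ a c, H (a * c) = H a * ε c + ε'' a * H c := by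
    intro a c
    rw [hHdef, hmap_mul, hliftg, hε''def]
  have Hι : ∀ j, H (FreeAlgebra.ι (ZMod 2) j) = hf j := fun j => hmap_ι v hf g j
  have hfσ : ∀ k, hf (σ k) = K (FreeAlgebra.ι (ZMod 2) k) := by
    intro k
    have hS : inS (σ k) := ⟨k, rfl⟩
    rw [hhfdef]; simp only [dif_pos hS]
    rw [hσ hS.choose_spec]
  have hevσ : ∀ k, ev (σ k) = e (FreeAlgebra.ι (ZMod 2) k) := by
    intro k
    have hS : inS (σ k) := ⟨k, rfl⟩
    rw [hevdef]; simp only [dif_pos hS]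
    rw [hσ hS.choose_spec]
  have hvunfold : ∀ j, v j = if inS j then ev j
      else g j + hmap (fun l => if _h : l < j then v l else 0) hf g
        (dB (FreeAlgebra.ι (ZMod 2) j)) := by
    intro j
    rw [hvdef0]
    conv_lhs => rw [vAux]
    simp only [Bool.false_eq_true, if_false, reduceIte]
  have hε''σ : ∀ x, ε'' (i (FreeAlgebra.ι (ZMod 2) x)) = e (FreeAlgebra.ι (ZMod 2) x) := by
    intro x
    rw [higen, hε''ι, hvunfold, if_pos ⟨x, rfl⟩, hevσ]
  have hε''i : ∀ a, ε'' (i a) = e a := by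
    have : ε''.comp i = e := by
      apply FreeAlgebra.hom_ext; funext x
      simpa using hε''σ x
    intro a; calc ε'' (i a) = (ε''.comp i) a := rfl
      _ = e a := by rw [this]
  have hHi : ∀ a, H (i a) = K a := by
    refine deriv_unique e e' (H.comp i.toLinearMap) K ?_ hK ?_
    · intro a c
      simp only [LinearMap.comp_apply, AlgHom.toLinearMap_apply, map_mul]
      rw [Hmul, hε''i, hεi]
    · intro x
      simp only [LinearMap.comp_apply, AlgHom.toLinearMap_apply]
      rw [higen, Hι, hfσ]
  have genA : ∀ j, ε'' (FreeAlgebra.ι (ZMod 2) j) + ε (FreeAlgebra.ι (ZMod 2) j)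
      = H (dB (FreeAlgebra.ι (ZMod 2) j)) := by
    intro j
    by_cases hS : inS j
    · obtain ⟨k, rfl⟩ := hS
      have h1 : ε (FreeAlgebra.ι (ZMod 2) (σ k)) = e' (FreeAlgebra.ι (ZMod 2) k) := by
        rw [← higen, hεi]
      have h2 : ε'' (FreeAlgebra.ι (ZMod 2) (σ k)) = e (FreeAlgebra.ι (ZMod 2) k) := by
        rw [← higen]; exact hε''σ k
      rw [h1, h2, hKd, ← higen, hi, hHi]
    · rw [hε''ι, hvunfold, if_neg hS]
      have hagree : hmap (fun l => if _h : l < j then v l else 0) hf g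
          (dB (FreeAlgebra.ι (ZMod 2) j)) = H (dB (FreeAlgebra.ι (ZMod 2) j)) := by
        rw [hHdef]
        refine hmap_congr _ _ _ _ _ _ {l | l < j} ?_ (hdB_tri j)
        intro x hx
        have hx' : x < j := hx
        exact ⟨by rw [dif_pos hx'], rfl, rfl⟩
      rw [hagree, z7]
  have step_mul : ∀ x y : FreeAlgebra (ZMod 2) (Fin b),
      (ε'' (dB x) = 0 ∧ ε'' x + ε x + H (dB x) = 0) →
      (ε'' (dB y) = 0 ∧ ε'' y + ε y + H (dB y) = 0) →
      (ε'' (dB (x * y)) = 0 ∧ ε'' (x * y) + ε (x * y) + H (dB (x * y)) = 0) := by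
    intro x y hx' hy'
    constructor
    · rw [hdB_leib, map_add, map_mul, map_mul, hx'.1, hy'.1, zero_mul, mul_zero, add_zero]
    · rw [map_mul, map_mul, hdB_leib, map_add, Hmul, Hmul, hε, hx'.1,
        z6 _ _ _ hx'.2, z6 _ _ _ hy'.2]
      simp only [zero_mul, mul_zero, add_zero, zero_add]
      generalize ε x = p
      generalize ε y = q
      generalize ε'' x = r
      generalize ε'' y = s
      revert p q r s
      decide
  have step_add : ∀ x y : FreeAlgebra (ZMod 2) (Fin b),
      (ε'' (dB x) = 0 ∧ ε'' x + ε x + H (dB x) = 0) →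
      (ε'' (dB y) = 0 ∧ ε'' y + ε y + H (dB y) = 0) →
      (ε'' (dB (x + y)) = 0 ∧ ε'' (x + y) + ε (x + y) + H (dB (x + y)) = 0) := by
    intro x y hx' hy'
    constructor
    · rw [map_add, map_add, hx'.1, hy'.1, add_zero]
    · rw [map_add, map_add, map_add, map_add]
      calc ε'' x + ε'' y + (ε x + ε y) + (H (dB x) + H (dB y))
          = (ε'' x + ε x + H (dB x)) + (ε'' y + ε y + H (dB y)) := by ring
        _ = 0 := by rw [hx'.2, hy'.2, add_zero]
  have step_sc : ∀ r : ZMod 2,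
      ε'' (dB (algebraMap (ZMod 2) (FreeAlgebra (ZMod 2) (Fin b)) r)) = 0 ∧
      ε'' (algebraMap (ZMod 2) _ r) + ε (algebraMap (ZMod 2) _ r) +
        H (dB (algebraMap (ZMod 2) (FreeAlgebra (ZMod 2) (Fin b)) r)) = 0 := by
    intro r
    constructor
    · rw [d_algebraMap dB hdB_leib, map_zero]
    · rw [d_algebraMap dB hdB_leib, map_zero, add_zero, AlgHom.commutes, AlgHom.commutes]
      exact z2 _
  have gen_ok : ∀ l : Fin b, ε'' (FreeAlgebra.ι (ZMod 2) l) + ε (FreeAlgebra.ι (ZMod 2) l)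
      + H (dB (FreeAlgebra.ι (ZMod 2) l)) = 0 := by
    intro l; rw [genA l, z2]
  have main : ∀ m : ℕ, ∀ a ∈ Algebra.adjoin (ZMod 2)
      (FreeAlgebra.ι (ZMod 2) '' {l : Fin b | l.val < m}),
      ε'' (dB a) = 0 ∧ ε'' a + ε a + H (dB a) = 0 := by
    intro m
    induction m using Nat.strong_induction_on with
    | _ m IH =>
      intro a ha
      induction ha using Algebra.adjoin_induction with
      | mem x hx =>
        obtain ⟨l, hl, rfl⟩ := hx
        refine ⟨?_, gen_ok l⟩
        have hw : dB (FreeAlgebra.ι (ZMod 2) l) ∈ Algebra.adjoin (ZMod 2)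
            (FreeAlgebra.ι (ZMod 2) '' {l' : Fin b | l'.val < l.val}) := by
          refine Algebra.adjoin_mono (Set.image_mono ?_) (hdB_tri l)
          intro y hy; exact hy
        have hQ := IH l.val hl _ hw
        have hε''w : ε'' (dB (FreeAlgebra.ι (ZMod 2) l))
            = ε (dB (FreeAlgebra.ι (ZMod 2) l))
              + H (dB (dB (FreeAlgebra.ι (ZMod 2) l))) := z8 _ _ _ hQ.2
        rw [hε''w, hε, hdB_sq, map_zero, add_zero]
      | algebraMap r => exact step_sc r
      | add x y hx hy hx' hy' => exact step_add x y hx' hy'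
      | mul x y hx hy hx' hy' => exact step_mul x y hx' hy'
  have final : ∀ a, ε'' (dB a) = 0 ∧ ε'' a + ε a + H (dB a) = 0 := by
    intro a
    induction a using FreeAlgebra.induction with
    | grade0 r => exact step_sc r
    | grade1 l =>
      refine main (l.val + 1) _ (Algebra.subset_adjoin ⟨l, ?_, rfl⟩)
      simp
    | mul x y hx' hy' => exact step_mul x y hx' hy'
    | add x y hx' hy' => exact step_add x y hx' hy'
  exact ⟨ε'', H, fun a => (final a).1, hε''i, Hmul, fun a => z5 _ _ _ (final a).2⟩

end MCylAux

/-- An augmentation of the based DGA `(FreeAlgebra (ZMod 2) X, dX)`. -/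
def IsAug {X : Type} (dX : FreeAlgebra (ZMod 2) X →ₗ[ZMod 2] FreeAlgebra (ZMod 2) X)
    (ε : FreeAlgebra (ZMod 2) X →ₐ[ZMod 2] ZMod 2) : Prop :=
  ∀ a, ε (dX a) = 0

/-- The set of augmentations of `(FreeAlgebra (ZMod 2) X, dX)`. -/
def Aug {X : Type} (dX : FreeAlgebra (ZMod 2) X →ₗ[ZMod 2] FreeAlgebra (ZMod 2) X) : Type :=
  {ε : FreeAlgebra (ZMod 2) X →ₐ[ZMod 2] ZMod 2 // IsAug dX ε}

/-- DGA homotopy of augmentations: `ε + ε' = K ∘ ∂` for some `(ε,ε')`-derivation `K`. -/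
def AugHtpy {X : Type} (dX : FreeAlgebra (ZMod 2) X →ₗ[ZMod 2] FreeAlgebra (ZMod 2) X)
    (e e' : Aug dX) : Prop :=
  ∃ K : FreeAlgebra (ZMod 2) X →ₗ[ZMod 2] ZMod 2,
    (∀ a b, K (a * b) = K a * e'.1 b + e.1 a * K b) ∧
    (∀ a, e.1 a + e'.1 a = K (dX a))

/-- The set of homotopy classes of augmentations: the quotient of `Aug dX` by the
equivalence relation generated by DGA homotopy. -/
def AugCl {X : Type} (dX : FreeAlgebra (ZMod 2) X →ₗ[ZMod 2] FreeAlgebra (ZMod 2) X) : Type :=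
  Quot (AugHtpy dX)

/-- The induced augmentation set of the immersed DGA map `(𝒜₁ →f ℬ ←i 𝒜₂)`:
the set of pairs `([ε∘i], [ε∘f])` for `ε` an augmentation of `ℬ`. -/
def augSet {XB XA2 XA1 : Type}
    (dB : FreeAlgebra (ZMod 2) XB →ₗ[ZMod 2] FreeAlgebra (ZMod 2) XB)
    (dA2 : FreeAlgebra (ZMod 2) XA2 →ₗ[ZMod 2] FreeAlgebra (ZMod 2) XA2)
    (dA1 : FreeAlgebra (ZMod 2) XA1 →ₗ[ZMod 2] FreeAlgebra (ZMod 2) XA1)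
    (i : FreeAlgebra (ZMod 2) XA2 →ₐ[ZMod 2] FreeAlgebra (ZMod 2) XB)
    (f : FreeAlgebra (ZMod 2) XA1 →ₐ[ZMod 2] FreeAlgebra (ZMod 2) XB) :
    Set (AugCl dA2 × AugCl dA1) :=
  {q | ∃ (ε : Aug dB) (u : Aug dA2) (v : Aug dA1),
      (∀ a, u.1 a = ε.1 (i a)) ∧ (∀ a, v.1 a = ε.1 (f a)) ∧
      q = (Quot.mk _ u, Quot.mk _ v)}

open MCylAux in
/-- Composition of immersed DGA maps via the standard mapping cylinder:
given immersed DGA maps `M₁ = (𝒜₁ →f₁ ℬ₁ ←i₁ 𝒜₂)` and `M₂ = (𝒜₂ →f₂ ℬ₂ ←i₂ 𝒜₃)` between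
triangular based DGAs over `ℤ/2` and the standard mapping cylinder DGA
`𝒟 = ℬ₁ * Â₂ * ℬ₂` of `i₁` and `f₂`, the diagram `(𝒜₁ →^{j₁∘f₁} 𝒟 ←^{j₂∘i₂} 𝒜₃)` is an
immersed DGA map whose induced augmentation set is the composite relation
`I(M₁) ∘ I(M₂)`. -/
theorem mapping_cylinder_composition_augmentation_sets
    (n₁ n₂ n₃ b₁ b₂ : ℕ)
    (dA1 : FreeAlgebra (ZMod 2) (Fin n₁) →ₗ[ZMod 2] FreeAlgebra (ZMod 2) (Fin n₁))
    (dA2 : FreeAlgebra (ZMod 2) (Fin n₂) →ₗ[ZMod 2] FreeAlgebra (ZMod 2) (Fin n₂))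
    (dA3 : FreeAlgebra (ZMod 2) (Fin n₃) →ₗ[ZMod 2] FreeAlgebra (ZMod 2) (Fin n₃))
    (dB1 : FreeAlgebra (ZMod 2) (Fin b₁) →ₗ[ZMod 2] FreeAlgebra (ZMod 2) (Fin b₁))
    (dB2 : FreeAlgebra (ZMod 2) (Fin b₂) →ₗ[ZMod 2] FreeAlgebra (ZMod 2) (Fin b₂))
    (hdA1_leib : ∀ a b, dA1 (a * b) = dA1 a * b + a * dA1 b)
    (hdA1_sq : ∀ a, dA1 (dA1 a) = 0)
    (hdA1_tri : ∀ k : Fin n₁, dA1 (FreeAlgebra.ι (ZMod 2) k) ∈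
      Algebra.adjoin (ZMod 2) (FreeAlgebra.ι (ZMod 2) '' {l : Fin n₁ | l < k}))
    (hdA2_leib : ∀ a b, dA2 (a * b) = dA2 a * b + a * dA2 b)
    (hdA2_sq : ∀ a, dA2 (dA2 a) = 0)
    (hdA2_tri : ∀ k : Fin n₂, dA2 (FreeAlgebra.ι (ZMod 2) k) ∈
      Algebra.adjoin (ZMod 2) (FreeAlgebra.ι (ZMod 2) '' {l : Fin n₂ | l < k}))
    (hdA3_leib : ∀ a b, dA3 (a * b) = dA3 a * b + a * dA3 b)
    (hdA3_sq : ∀ a, dA3 (dA3 a) = 0)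
    (hdA3_tri : ∀ k : Fin n₃, dA3 (FreeAlgebra.ι (ZMod 2) k) ∈
      Algebra.adjoin (ZMod 2) (FreeAlgebra.ι (ZMod 2) '' {l : Fin n₃ | l < k}))
    (hdB1_leib : ∀ a b, dB1 (a * b) = dB1 a * b + a * dB1 b)
    (hdB1_sq : ∀ a, dB1 (dB1 a) = 0)
    (hdB1_tri : ∀ k : Fin b₁, dB1 (FreeAlgebra.ι (ZMod 2) k) ∈
      Algebra.adjoin (ZMod 2) (FreeAlgebra.ι (ZMod 2) '' {l : Fin b₁ | l < k}))
    (hdB2_leib : ∀ a b, dB2 (a * b) = dB2 a * b + a * dB2 b)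
    (hdB2_sq : ∀ a, dB2 (dB2 a) = 0)
    (hdB2_tri : ∀ k : Fin b₂, dB2 (FreeAlgebra.ι (ZMod 2) k) ∈
      Algebra.adjoin (ZMod 2) (FreeAlgebra.ι (ZMod 2) '' {l : Fin b₂ | l < k}))
    -- the immersed DGA map `M₁ = (𝒜₁ →f₁ ℬ₁ ←i₁ 𝒜₂)`
    (f₁ : FreeAlgebra (ZMod 2) (Fin n₁) →ₐ[ZMod 2] FreeAlgebra (ZMod 2) (Fin b₁))
    (hf₁ : ∀ a, dB1 (f₁ a) = f₁ (dA1 a))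
    (i₁ : FreeAlgebra (ZMod 2) (Fin n₂) →ₐ[ZMod 2] FreeAlgebra (ZMod 2) (Fin b₁))
    (hi₁ : ∀ a, dB1 (i₁ a) = i₁ (dA2 a))
    (σ₁ : Fin n₂ → Fin b₁) (hσ₁ : Function.Injective σ₁)
    (hi₁_gen : ∀ x : Fin n₂, i₁ (FreeAlgebra.ι (ZMod 2) x) = FreeAlgebra.ι (ZMod 2) (σ₁ x))
    -- the immersed DGA map `M₂ = (𝒜₂ →f₂ ℬ₂ ←i₂ 𝒜₃)`
    (f₂ : FreeAlgebra (ZMod 2) (Fin n₂) →ₐ[ZMod 2] FreeAlgebra (ZMod 2) (Fin b₂))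
    (hf₂ : ∀ a, dB2 (f₂ a) = f₂ (dA2 a))
    (i₂ : FreeAlgebra (ZMod 2) (Fin n₃) →ₐ[ZMod 2] FreeAlgebra (ZMod 2) (Fin b₂))
    (hi₂ : ∀ a, dB2 (i₂ a) = i₂ (dA3 a))
    (σ₂ : Fin n₃ → Fin b₂) (hσ₂ : Function.Injective σ₂)
    (hi₂_gen : ∀ x : Fin n₃, i₂ (FreeAlgebra.ι (ZMod 2) x) = FreeAlgebra.ι (ZMod 2) (σ₂ x))
    -- the standard mapping cylinder DGA `𝒟 = ℬ₁ * Â₂ * ℬ₂` of `i₁` and `f₂`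
    (j₁ : FreeAlgebra (ZMod 2) (Fin b₁) →ₐ[ZMod 2]
      FreeAlgebra (ZMod 2) (Fin b₁ ⊕ (Fin n₂ ⊕ Fin b₂)))
    (j₂ : FreeAlgebra (ZMod 2) (Fin b₂) →ₐ[ZMod 2]
      FreeAlgebra (ZMod 2) (Fin b₁ ⊕ (Fin n₂ ⊕ Fin b₂)))
    (hj₁ : ∀ x : Fin b₁, j₁ (FreeAlgebra.ι (ZMod 2) x) = FreeAlgebra.ι (ZMod 2) (Sum.inl x))
    (hj₂ : ∀ x : Fin b₂, j₂ (FreeAlgebra.ι (ZMod 2) x) =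
      FreeAlgebra.ι (ZMod 2) (Sum.inr (Sum.inr x)))
    (Γ : FreeAlgebra (ZMod 2) (Fin n₂) →ₗ[ZMod 2]
      FreeAlgebra (ZMod 2) (Fin b₁ ⊕ (Fin n₂ ⊕ Fin b₂)))
    (hΓ_der : ∀ a b, Γ (a * b) = Γ a * j₂ (f₂ b) + j₁ (i₁ a) * Γ b)
    (hΓ_gen : ∀ k : Fin n₂, Γ (FreeAlgebra.ι (ZMod 2) k) =
      FreeAlgebra.ι (ZMod 2) (Sum.inr (Sum.inl k)))
    (dD : FreeAlgebra (ZMod 2) (Fin b₁ ⊕ (Fin n₂ ⊕ Fin b₂)) →ₗ[ZMod 2]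
      FreeAlgebra (ZMod 2) (Fin b₁ ⊕ (Fin n₂ ⊕ Fin b₂)))
    (hdD_leib : ∀ a b, dD (a * b) = dD a * b + a * dD b)
    (hdD_1 : ∀ x : Fin b₁, dD (FreeAlgebra.ι (ZMod 2) (Sum.inl x)) =
      j₁ (dB1 (FreeAlgebra.ι (ZMod 2) x)))
    (hdD_2 : ∀ x : Fin b₂, dD (FreeAlgebra.ι (ZMod 2) (Sum.inr (Sum.inr x))) =
      j₂ (dB2 (FreeAlgebra.ι (ZMod 2) x)))
    (hdD_hat : ∀ k : Fin n₂, dD (FreeAlgebra.ι (ZMod 2) (Sum.inr (Sum.inl k))) =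
      j₁ (i₁ (FreeAlgebra.ι (ZMod 2) k)) + j₂ (f₂ (FreeAlgebra.ι (ZMod 2) k)) +
        Γ (dA2 (FreeAlgebra.ι (ZMod 2) k))) :
    (∀ a, dD (j₁ (f₁ a)) = j₁ (f₁ (dA1 a))) ∧
    (∀ a, dD (j₂ (i₂ a)) = j₂ (i₂ (dA3 a))) ∧
    (∃ τ : Fin n₃ → Fin b₁ ⊕ (Fin n₂ ⊕ Fin b₂), Function.Injective τ ∧
      ∀ x : Fin n₃, j₂ (i₂ (FreeAlgebra.ι (ZMod 2) x)) = FreeAlgebra.ι (ZMod 2) (τ x)) ∧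
    augSet dD dA3 dA1 (j₂.comp i₂) (j₁.comp f₁) =
      {q : AugCl dA3 × AugCl dA1 | ∃ y : AugCl dA2,
        (q.1, y) ∈ augSet dB2 dA3 dA2 i₂ f₂ ∧ (y, q.2) ∈ augSet dB1 dA2 dA1 i₁ f₁} := by
  classical
  have hcm1 : ∀ a, dD (j₁ a) = j₁ (dB1 a) :=
    chain_ext dB1 dD hdB1_leib hdD_leib j₁ (fun x => by rw [hj₁, hdD_1])
  have hcm2 : ∀ a, dD (j₂ a) = j₂ (dB2 a) :=
    chain_ext dB2 dD hdB2_leib hdD_leib j₂ (fun x => by rw [hj₂, hdD_2])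
  refine ⟨fun a => by rw [hcm1, hf₁], fun a => by rw [hcm2, hi₂], ?_, ?_⟩
  · refine ⟨fun x => Sum.inr (Sum.inr (σ₂ x)),
      Sum.inr_injective.comp (Sum.inr_injective.comp hσ₂), fun x => by
        rw [hi₂_gen, hj₂]⟩
  ext q
  constructor
  · rintro ⟨ε, u, v, hu, hv, hq⟩
    -- pull back the augmentation of the cylinder to the two pieces
    have haug2 : IsAug dB2 (ε.1.comp j₂) := fun a => by
      show ε.1 (j₂ (dB2 a)) = 0
      rw [← hcm2]; exact ε.2 _
    have haug1 : IsAug dB1 (ε.1.comp j₁) := fun a => by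
      show ε.1 (j₁ (dB1 a)) = 0
      rw [← hcm1]; exact ε.2 _
    have hw2aug : IsAug dA2 ((ε.1.comp j₂).comp f₂) := fun a => by
      show ε.1 (j₂ (f₂ (dA2 a))) = 0
      rw [← hf₂, ← hcm2]; exact ε.2 _
    have hu1aug : IsAug dA2 ((ε.1.comp j₁).comp i₁) := fun a => by
      show ε.1 (j₁ (i₁ (dA2 a))) = 0
      rw [← hi₁, ← hcm1]; exact ε.2 _
    set w : Aug dA2 := ⟨(ε.1.comp j₂).comp f₂, hw2aug⟩ with hwdef
    set u₁ : Aug dA2 := ⟨(ε.1.comp j₁).comp i₁, hu1aug⟩ with hu₁def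
    have hvan1 : ∀ a, ε.1 (j₁ (i₁ (dA2 a))) = 0 := fun a => hu1aug a
    have hvan2 : ∀ a, ε.1 (j₂ (f₂ (dA2 a))) = 0 := fun a => hw2aug a
    have h2 : (2 : ZMod 2) = 0 := rfl
    have hGam : ∀ a, ε.1 (j₁ (i₁ a)) + ε.1 (j₂ (f₂ a)) + ε.1 (Γ (dA2 a)) = 0 := by
      intro a
      induction a using FreeAlgebra.induction with
      | grade0 r =>
        simp only [d_algebraMap dA2 hdA2_leib, map_zero, add_zero, AlgHom.commutes,
          Algebra.algebraMap_self_apply]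
        exact z2 _
      | grade1 k =>
        have := ε.2 (FreeAlgebra.ι (ZMod 2) (Sum.inr (Sum.inl k)))
        rw [hdD_hat, map_add, map_add] at this
        exact this
      | mul a c ha hc =>
        simp only [hdA2_leib, hΓ_der, map_add, map_mul]
        rw [hvan1 a, hvan2 c]
        simp only [zero_mul, mul_zero, add_zero, zero_add]
        linear_combination (ε.1 (j₂ (f₂ c))) * ha + (ε.1 (j₁ (i₁ a))) * hc
          - (ε.1 (j₁ (i₁ a))) * (ε.1 (j₂ (f₂ c))) * h2
      | add a c ha hc =>
        simp only [map_add]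
        linear_combination ha + hc
    have hhtpy : AugHtpy dA2 u₁ w := by
      refine ⟨ε.1.toLinearMap.comp Γ, ?_, ?_⟩
      · intro a c
        simp only [LinearMap.comp_apply, AlgHom.toLinearMap_apply, hΓ_der, map_add, map_mul]
        rfl
      · intro a
        exact z5 _ _ _ (hGam a)
    refine ⟨Quot.mk _ w, ⟨⟨ε.1.comp j₂, haug2⟩, u, w, ?_, fun a => rfl, ?_⟩,
      ⟨⟨ε.1.comp j₁, haug1⟩, u₁, v, fun a => rfl, ?_, ?_⟩⟩
    · intro a; rw [hu a]; rfl
    · exact Prod.ext (by rw [hq]) rfl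
    · intro a; rw [hv a]; rfl
    · exact Prod.ext (Quot.sound hhtpy).symm (by rw [hq])
  · rintro ⟨y, ⟨ε₂, u, w₂, hu, hw₂, hpair₂⟩, ⟨ε₁, u₁, v, hu₁, hv, hpair₁⟩⟩
    have hq1 : q.1 = Quot.mk _ u := congrArg Prod.fst hpair₂
    have hy2 : y = Quot.mk _ w₂ := congrArg Prod.snd hpair₂
    have hy1 : y = Quot.mk _ u₁ := congrArg Prod.fst hpair₁
    have hq2 : q.2 = Quot.mk _ v := congrArg Prod.snd hpair₁
    have hEG : Relation.EqvGen (AugHtpy dA2) u₁ w₂ :=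
      Quot.eqvGen_exact (hy1.symm.trans hy2)
    -- the liftable predicate
    set P : Aug dA2 → Prop := fun e =>
      ∃ ε' : FreeAlgebra (ZMod 2) (Fin b₁) →ₐ[ZMod 2] ZMod 2,
        (∀ a, ε' (dB1 a) = 0) ∧ (∀ a, ε' (i₁ a) = e.1 a) ∧
        ∃ vv : Aug dA1, (∀ a, vv.1 a = ε' (f₁ a)) ∧ Quot.mk (AugHtpy dA1) vv = q.2
      with hPdef
    have hPstep : ∀ e e' : Aug dA2, AugHtpy dA2 e e' → (P e ↔ P e') := by
      rintro e e' ⟨K, hK, hKd⟩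
      constructor
      · rintro ⟨εB, hεaug, hεi, vv, hvv, hvvq⟩
        obtain ⟨εB', H, haug', hi', Hrule, Hsum⟩ :=
          lift_htpy₁ dA2 dB1 hdB1_leib hdB1_sq hdB1_tri i₁ hi₁ σ₁ hσ₁ hi₁_gen
            εB hεaug e.1 e'.1 K hK hKd hεi
        have hvv'aug : IsAug dA1 (εB'.comp f₁) := fun a => by
          show εB' (f₁ (dA1 a)) = 0
          rw [← hf₁]; exact haug' _
        refine ⟨εB', haug', hi', ⟨εB'.comp f₁, hvv'aug⟩, fun a => rfl, ?_⟩
        have hh : AugHtpy dA1 vv ⟨εB'.comp f₁, hvv'aug⟩ := by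
          refine ⟨H.comp f₁.toLinearMap, ?_, ?_⟩
          · intro a c
            simp only [LinearMap.comp_apply, AlgHom.toLinearMap_apply, map_mul]
            rw [Hrule, hvv a]
            rfl
          · intro a
            simp only [LinearMap.comp_apply, AlgHom.toLinearMap_apply]
            rw [hvv a, ← hf₁, ← Hsum]
            rfl
        exact (Quot.sound hh).symm.trans hvvq
      · rintro ⟨εB, hεaug, hεi, vv, hvv, hvvq⟩
        obtain ⟨εB', H, haug', hi', Hrule, Hsum⟩ :=
          lift_htpy₂ dA2 dB1 hdB1_leib hdB1_sq hdB1_tri i₁ hi₁ σ₁ hσ₁ hi₁_gen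
            εB hεaug e.1 e'.1 K hK hKd hεi
        have hvv'aug : IsAug dA1 (εB'.comp f₁) := fun a => by
          show εB' (f₁ (dA1 a)) = 0
          rw [← hf₁]; exact haug' _
        refine ⟨εB', haug', hi', ⟨εB'.comp f₁, hvv'aug⟩, fun a => rfl, ?_⟩
        have hh : AugHtpy dA1 ⟨εB'.comp f₁, hvv'aug⟩ vv := by
          refine ⟨H.comp f₁.toLinearMap, ?_, ?_⟩
          · intro a c
            simp only [LinearMap.comp_apply, AlgHom.toLinearMap_apply, map_mul]
            rw [Hrule, hvv c]
            rfl
          · intro a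
            simp only [LinearMap.comp_apply, AlgHom.toLinearMap_apply]
            rw [hvv a, ← hf₁, ← Hsum]
            rfl
        rw [Quot.sound hh, hvvq]
    have hPEG : ∀ e e' : Aug dA2, Relation.EqvGen (AugHtpy dA2) e e' → (P e ↔ P e') := by
      intro e e' h
      induction h with
      | rel x y' hr => exact hPstep x y' hr
      | refl x => exact Iff.rfl
      | symm x y' h ih => exact ih.symm
      | trans x y' z h1 h2 ih1 ih2 => exact ih1.trans ih2
    have hPu₁ : P u₁ :=
      ⟨ε₁.1, ε₁.2, fun a => (hu₁ a).symm, v, hv, hq2.symm⟩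
    obtain ⟨ε₁', haug', hi₁', vv, hvv, hvvq⟩ := (hPEG _ _ hEG).mp hPu₁
    -- build the augmentation of the cylinder
    set εD : FreeAlgebra (ZMod 2) (Fin b₁ ⊕ (Fin n₂ ⊕ Fin b₂)) →ₐ[ZMod 2] ZMod 2 :=
      FreeAlgebra.lift (ZMod 2) (Sum.elim (fun x => ε₁' (FreeAlgebra.ι (ZMod 2) x))
        (Sum.elim (fun _ => 0) (fun x => ε₂.1 (FreeAlgebra.ι (ZMod 2) x)))) with hεDdef
    have hD1 : ∀ a, εD (j₁ a) = ε₁' a := by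
      have : εD.comp j₁ = ε₁' := by
        apply FreeAlgebra.hom_ext; funext x
        simp [hεDdef, hj₁]
      intro a; calc εD (j₁ a) = (εD.comp j₁) a := rfl
        _ = ε₁' a := by rw [this]
    have hD2 : ∀ a, εD (j₂ a) = ε₂.1 a := by
      have : εD.comp j₂ = ε₂.1 := by
        apply FreeAlgebra.hom_ext; funext x
        simp [hεDdef, hj₂]
      intro a; calc εD (j₂ a) = (εD.comp j₂) a := rfl
        _ = ε₂.1 a := by rw [this]
    have hGam0 : ∀ a, εD (Γ a) = 0 := by
      refine deriv_unique ((εD.comp j₁).comp i₁) ((εD.comp j₂).comp f₂)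
        (εD.toLinearMap.comp Γ) 0 ?_ ?_ ?_
      · intro a c
        simp only [LinearMap.comp_apply, AlgHom.toLinearMap_apply, AlgHom.comp_apply,
          hΓ_der, map_add, map_mul]
      · intro a c; simp
      · intro x
        simp only [LinearMap.comp_apply, AlgHom.toLinearMap_apply, LinearMap.zero_apply,
          hΓ_gen]
        simp [hεDdef]
    have hDaug : IsAug dD εD := by
      refine aug_of_gen dD hdD_leib εD ?_
      rintro (x | k | x)
      · rw [hdD_1, hD1]; exact haug' _
      · rw [hdD_hat, map_add, map_add, hD1, hD2, hi₁', ← hw₂]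
        have := hGam0 (dA2 (FreeAlgebra.ι (ZMod 2) k))
        rw [this, add_zero]
        exact z2 _
      · rw [hdD_2, hD2]; exact ε₂.2 _
    refine ⟨⟨εD, hDaug⟩, u, vv, ?_, ?_, ?_⟩
    · intro a
      show u.1 a = εD (j₂ (i₂ a))
      rw [hD2, hu a]
    · intro a
      show vv.1 a = εD (j₁ (f₁ a))
      rw [hD1, hvv a]
    · exact Prod.ext hq1 hvvq.symm



end
end

section
/- Let m, C > 0 be real numbers, let α: ℝ → ℝ and g: ℝ → ℝ be functions, let F: ℝ × ℝ → ℝ, and fix (t,x) ∈ ℝ² with t ∈ [−7/8, −1/4]. Assume α is differentiable at t with α'(t) ≥ 0 and 0 ≤ α(t) ≤ 1, and that s ↦ F(s,x) is differentiable at t. Define G(s,x') = (1−α(s))·m·(1+s)·g(x') + α(s)·F(s,x'). If |F(t,x)| ≥ C, m·|g(x)| < C, g(x)·F(t,x) > 0, and (∂ₜF)(t,x)·F(t,x) > 0, then (∂ₜG)(t,x)·F(t,x) > 0; that is, the partial derivative of G in the first variable at (t,x) is nonzero and has the same sign as F(t,x). -/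
/-- Lemma B.3 of the paper.  For the interpolated difference function
`G(s,x') = (1 − α(s))·m·(1+s)·g(x') + α(s)·F(s,x')`, under the stated hypotheses the partial
derivative of `G` in the first variable at `(t,x)` is nonzero and has the same sign as
`F(t,x)`. -/
theorem interpolated_t_derivative_sign
    (m C : ℝ) (hm : 0 < m) (hC : 0 < C)
    (α g : ℝ → ℝ) (F : ℝ → ℝ → ℝ) (t x : ℝ)
    (ht : t ∈ Set.Icc (-7/8 : ℝ) (-1/4 : ℝ))
    (hα : DifferentiableAt ℝ α t) (hα' : 0 ≤ deriv α t)
    (hα01 : α t ∈ Set.Icc (0 : ℝ) 1)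
    (hF : DifferentiableAt ℝ (fun s => F s x) t)
    (G : ℝ → ℝ → ℝ)
    (hG : ∀ s x', G s x' = (1 - α s) * m * (1 + s) * g x' + α s * F s x')
    (hFC : C ≤ |F t x|) (hmg : m * |g x| < C)
    (hgF : 0 < g x * F t x)
    (hFt : 0 < deriv (fun s => F s x) t * F t x) :
    0 < deriv (fun s => G s x) t * F t x := by
  obtain ⟨ht1, ht2⟩ := ht
  obtain ⟨hα0, hα1⟩ := hα01
  set a := deriv α t with ha
  set f' := deriv (fun s => F s x) t with hf'
  have hαd : HasDerivAt α a t := hα.hasDerivAt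
  have hFd : HasDerivAt (fun s => F s x) f' t := hF.hasDerivAt
  have h1 : HasDerivAt (fun s => 1 - α s) (0 - a) t :=
    (hasDerivAt_const t (1 : ℝ)).sub hαd
  have h2 : HasDerivAt (fun s => (1 : ℝ) + s) 1 t := (hasDerivAt_id t).const_add 1
  have h3 : HasDerivAt (fun s => m * (1 + s) * g x) (m * 1 * g x) t :=
    (h2.const_mul m).mul_const (g x)
  have h4 : HasDerivAt (fun s => (1 - α s) * (m * (1 + s) * g x))
      ((0 - a) * (m * (1 + t) * g x) + (1 - α t) * (m * 1 * g x)) t := h1.mul h3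
  have h5 : HasDerivAt (fun s => α s * F s x) (a * F t x + α t * f') t := hαd.mul hFd
  have h6 : HasDerivAt (fun s => G s x)
      ((0 - a) * (m * (1 + t) * g x) + (1 - α t) * (m * 1 * g x)
        + (a * F t x + α t * f')) t := by
    have := h4.add h5
    apply this.congr_of_eventuallyEq
    filter_upwards with s
    rw [hG]; simp only [Pi.add_apply]; ring
  rw [h6.deriv]
  have hFne : 0 < |F t x| := lt_of_lt_of_le hC hFC
  -- key term: a * (F t x - m*(1+t)*g x) * F t x ≥ 0
  have hA : 0 < m * (g x * F t x) := mul_pos hm hgF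
  have hkey : 0 ≤ a * ((F t x - m * (1 + t) * g x) * F t x) := by
    apply mul_nonneg hα'
    rcases le_or_gt 0 (F t x) with hFpos | hFneg
    · have hFpos' : 0 < F t x := lt_of_lt_of_le hC (abs_of_nonneg hFpos ▸ hFC)
      have hgpos : 0 < g x := by nlinarith
      have : m * (1 + t) * g x ≤ m * g x := by nlinarith
      have : m * g x < C := by rwa [abs_of_pos hgpos] at hmg
      have : C ≤ F t x := by rwa [abs_of_pos hFpos'] at hFC
      nlinarith
    · have hgneg : g x < 0 := by nlinarith
      have : m * -g x < C := by rwa [abs_of_neg hgneg] at hmg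
      have : C ≤ -F t x := by rwa [abs_of_neg hFneg] at hFC
      nlinarith
  -- convex combination term
  have hconv : 0 < (1 - α t) * (m * (g x * F t x)) + α t * (f' * F t x) := by
    rcases eq_or_lt_of_le hα0 with h0 | h0
    · rw [← h0]; simpa using hA
    · have h1' : 0 ≤ (1 - α t) * (m * (g x * F t x)) :=
        mul_nonneg (by linarith) hA.le
      nlinarith [mul_pos h0 hFt]
  nlinarith [hkey, hconv]
end
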